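/- Let $V$ be a $k$-dimensional linear subspace of $\mathbb{R}^N$, let $S$ be a $k$-dimensional unit sphere of the form $S=\{x:\sum_{j\in J}x_j^2=1,\ x_j=0\ (j\notin J)\}$ for a $(k+1)$-element set $J\subset\{1,\dots,N\}$ with $\mathrm{Span}(V^{\perp}\cup\{e_j:j\in J\})=\mathbb{R}^N$. Then there exists $y_0\in V^{\perp}\cap S$ and $\delta>0$ such that the orthogonal projection $P_V$ restricted to $S\cap B(y_0,\delta)$ is a bi-Lipschitz homeomorphism onto its image. -/

import Mathlib

open MeasureTheory Metric Set

/-- The `k`-dimensional unit sphere spanned by the coordinates in `J`: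
`{x ∈ ℝ^N : ∑_{j ∈ J} x_j² = 1, x_j = 0 for j ∉ J}`. -/
def sphereJ (N : ℕ) (J : Finset (Fin N)) : Set (EuclideanSpace ℝ (Fin N)) :=
  {x | ∑ j ∈ J, (x j) ^ 2 = 1 ∧ ∀ j ∉ J, x j = 0}

/-!
The coordinate subspace `W = span {e_j : j ∈ J}` has dimension `k + 1` and, together with
`V^⊥`, spans `ℝ^N`; hence `V^⊥ ∩ W` is a line `ℝ y₀` with `‖y₀‖ = 1`, and `y₀ ∈ V^⊥ ∩ S`.
The kernel of `P_V` meets `W` exactly in that line, so `P_V` is injective, hence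
anti-Lipschitz, on the tangent space `W ∩ y₀^⊥` of `S` at `y₀`. A chord `u = x - y` of `S` with
`x, y` near `y₀` is almost tangent: `|⟪y₀, u⟫| ≤ ‖u‖ / 2`, because `u ⊥ (x + y) / 2` and
`(x + y) / 2` is within `1 / 2` of `y₀`. Removing its `y₀`-component does not change `P_V u` and
keeps at least half of its norm.
-/

open RealInnerProductSpace

section InnerProductSpace

variable {E : Type*} [NormedAddCommGroup E] [InnerProductSpace ℝ E]

lemma Submodule.finrank_orthogonal_inf_add_finrank [FiniteDimensional ℝ E] {V W : Submodule ℝ E}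
    (h : Vᗮ ⊔ W = ⊤) :
    Module.finrank ℝ ↥(Vᗮ ⊓ W) + Module.finrank ℝ V = Module.finrank ℝ W := by
  have hsup := Submodule.finrank_sup_add_finrank_inf_eq Vᗮ W
  have horth := V.finrank_add_finrank_orthogonal
  rw [h, finrank_top] at hsup
  omega

lemma Submodule.exists_norm_eq_one_eq_span_singleton {K : Submodule ℝ E}
    (hK : Module.finrank ℝ K = 1) : ∃ y ∈ K, ‖y‖ = 1 ∧ K = ℝ ∙ y := by
  obtain ⟨⟨v, hvK⟩, hv, -⟩ := finrank_eq_one_iff'.mp hK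
  have hv : v ≠ 0 := fun h => hv (Subtype.ext h)
  have hyK : ‖v‖⁻¹ • v ∈ K := K.smul_mem _ hvK
  have : FiniteDimensional ℝ K := Module.finite_of_finrank_eq_succ hK
  refine ⟨_, hyK, norm_smul_inv_norm hv, (Submodule.eq_of_le_of_finrank_eq ?_ ?_).symm⟩
  · exact (Submodule.span_singleton_le_iff_mem _ _).mpr hyK
  · rw [hK, finrank_span_singleton (by simpa using hv)]

lemma abs_inner_sub_le_of_mem_ball {x y z : E} {r : ℝ} (hxy : ‖x‖ = ‖y‖)
    (hx : x ∈ Metric.ball z r) (hy : y ∈ Metric.ball z r) : |⟪z, x - y⟫| ≤ r * ‖x - y‖ := by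
  have hmid : ⟪z, x - y⟫ = ⟪z - (1 / 2 : ℝ) • (x + y), x - y⟫ := by
    rw [inner_sub_left, real_inner_smul_left, (real_inner_add_sub_eq_zero_iff x y).mpr hxy,
      mul_zero, sub_zero]
  have hdist : ‖z - (1 / 2 : ℝ) • (x + y)‖ ≤ r := by
    rw [Metric.mem_ball, dist_comm, dist_eq_norm] at hx hy
    calc ‖z - (1 / 2 : ℝ) • (x + y)‖ = ‖(1 / 2 : ℝ) • ((z - x) + (z - y))‖ := by
          congr 1; module
      _ = (1 / 2) * ‖(z - x) + (z - y)‖ := by rw [norm_smul]; norm_num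
      _ ≤ r := by linarith [norm_add_le (z - x) (z - y)]
  rw [hmid]
  exact (abs_real_inner_le_norm _ _).trans (by gcongr)

lemma norm_sub_inner_smul_sq {y : E} (hy : ‖y‖ = 1) (u : E) :
    ‖u - ⟪y, u⟫ • y‖ ^ 2 = ‖u‖ ^ 2 - ⟪y, u⟫ ^ 2 := by
  rw [norm_sub_sq_real, real_inner_smul_right, real_inner_comm, norm_smul, hy,
    Real.norm_eq_abs, mul_one, sq_abs]
  ring

end InnerProductSpace

lemma LinearMap.exists_pos_mul_norm_le_of_disjoint_ker {E F : Type*} [NormedAddCommGroup E]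
    [NormedSpace ℝ E] [NormedAddCommGroup F] [NormedSpace ℝ F] (f : E →ₗ[ℝ] F)
    {T : Submodule ℝ E} [FiniteDimensional ℝ T] (hT : Disjoint T (LinearMap.ker f)) :
    ∃ c > 0, ∀ t ∈ T, c * ‖t‖ ≤ ‖f t‖ := by
  obtain ⟨K, -, hK⟩ :=
    (f.domRestrict T).injective_iff_antilipschitz.mp (f.injective_domRestrict_iff.mpr hT)
  obtain ⟨c, hc, hle⟩ := antilipschitzWith_iff_exists_mul_le_norm.mp ⟨K, hK⟩
  exact ⟨c, hc, fun t ht => hle ⟨t, ht⟩⟩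

lemma LinearMap.exists_pos_mul_norm_sub_le_of_ker_inf_eq_span {E F : Type*}
    [NormedAddCommGroup E] [InnerProductSpace ℝ E] [NormedAddCommGroup F] [NormedSpace ℝ F]
    (f : E →ₗ[ℝ] F) {W : Submodule ℝ E} [FiniteDimensional ℝ W] {y₀ : E} (hy₀ : ‖y₀‖ = 1)
    (hker : LinearMap.ker f ⊓ W = ℝ ∙ y₀) :
    ∃ c > 0, ∀ x ∈ W, ∀ y ∈ W, ‖x‖ = ‖y‖ → x ∈ Metric.ball y₀ (1 / 2) →
      y ∈ Metric.ball y₀ (1 / 2) → c * ‖x - y‖ ≤ ‖f x - f y‖ := by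
  have hdisj : Disjoint (W ⊓ (ℝ ∙ y₀)ᗮ) (LinearMap.ker f) := by
    rw [Submodule.disjoint_def]
    intro w ⟨hwW, hwy₀⟩ hwker
    have hw : w ∈ ℝ ∙ y₀ := hker ▸ ⟨hwker, hwW⟩
    exact Submodule.disjoint_def.mp (Submodule.orthogonal_disjoint _) w hw hwy₀
  obtain ⟨c, hc, hle⟩ := f.exists_pos_mul_norm_le_of_disjoint_ker hdisj
  have hy₀ker : y₀ ∈ LinearMap.ker f ⊓ W := hker.ge (Submodule.mem_span_singleton_self y₀)
  refine ⟨c / 2, half_pos hc, fun x hx y hy hxy hxB hyB => ?_⟩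
  set u := x - y
  set t := u - ⟪y₀, u⟫ • y₀
  have htT : t ∈ W ⊓ (ℝ ∙ y₀)ᗮ := by
    refine Submodule.mem_inf.mpr ⟨W.sub_mem (W.sub_mem hx hy) (W.smul_mem _ hy₀ker.2), ?_⟩
    rw [Submodule.mem_orthogonal_singleton_iff_inner_right, inner_sub_right,
      real_inner_smul_right, real_inner_self_eq_norm_sq, hy₀]
    ring
  have hft : f t = f u := by simp [t, LinearMap.mem_ker.mp hy₀ker.1]
  have htu : 1 / 2 * ‖u‖ ≤ ‖t‖ := by
    have ha := abs_inner_sub_le_of_mem_ball hxy hxB hyB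
    have ht := norm_sub_inner_smul_sq hy₀ u
    nlinarith [abs_nonneg ⟪y₀, u⟫, sq_abs ⟪y₀, u⟫, norm_nonneg t, norm_nonneg u]
  calc c / 2 * ‖x - y‖ = c * (1 / 2 * ‖u‖) := by ring
    _ ≤ c * ‖t‖ := by gcongr
    _ ≤ ‖f t‖ := hle t htT
    _ = ‖f x - f y‖ := by rw [hft, map_sub]

def coordSubspace (N : ℕ) (J : Finset (Fin N)) : Submodule ℝ (EuclideanSpace ℝ (Fin N)) :=
  Submodule.span ℝ ((fun j => EuclideanSpace.single j (1 : ℝ)) '' (J : Set (Fin N)))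

section coordSubspace

variable {N : ℕ} {J : Finset (Fin N)} {x : EuclideanSpace ℝ (Fin N)}

lemma coordSubspace_eq_span_basisFun :
    coordSubspace N J = Submodule.span ℝ (EuclideanSpace.basisFun (Fin N) ℝ '' J) := by
  simp only [coordSubspace, EuclideanSpace.basisFun_apply]

lemma mem_coordSubspace_iff : x ∈ coordSubspace N J ↔ ∀ j ∉ J, x j = 0 := by
  rw [coordSubspace_eq_span_basisFun, ← OrthonormalBasis.coe_toBasis,
    Module.Basis.mem_span_image]
  simp [Set.subset_def, not_imp_comm]

lemma finrank_coordSubspace : Module.finrank ℝ (coordSubspace N J) = J.card := by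
  rw [coordSubspace_eq_span_basisFun, ← OrthonormalBasis.coe_toBasis, Set.image_eq_range]
  exact (finrank_span_eq_card ((EuclideanSpace.basisFun (Fin N) ℝ).toBasis.linearIndependent.comp
    _ Subtype.val_injective)).trans (by simp)

lemma mem_sphereJ_iff : x ∈ sphereJ N J ↔ x ∈ coordSubspace N J ∧ ‖x‖ = 1 := by
  rw [mem_coordSubspace_iff, sphereJ, Set.mem_ofPred_eq, and_comm]
  refine and_congr_right fun hx => ?_
  rw [← pow_eq_one_iff_of_nonneg (norm_nonneg x) two_ne_zero, EuclideanSpace.norm_sq_eq,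
    ← Finset.sum_subset J.subset_univ fun j _ hj => by simp [hx j hj]]
  simp

end coordSubspace

theorem projection_biLipschitz_near_point_general (N k : ℕ)
    (V : Submodule ℝ (EuclideanSpace ℝ (Fin N))) (hV : Module.finrank ℝ V = k)
    (J : Finset (Fin N)) (hJ : J.card = k + 1)
    (hspan : Submodule.span ℝ
        ((Vᗮ : Set (EuclideanSpace ℝ (Fin N))) ∪
          ((fun j => EuclideanSpace.single j (1 : ℝ)) '' (J : Set (Fin N)))) = ⊤) :
    ∃ y₀ ∈ (Vᗮ : Set (EuclideanSpace ℝ (Fin N))) ∩ sphereJ N J, ∃ δ > (0 : ℝ),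
      ∃ c C : ℝ, 0 < c ∧
        ∀ x ∈ sphereJ N J ∩ Metric.ball y₀ δ, ∀ y ∈ sphereJ N J ∩ Metric.ball y₀ δ,
          c * ‖x - y‖ ≤ ‖(V.orthogonalProjectionOnto x : V) - V.orthogonalProjectionOnto y‖ ∧
          ‖(V.orthogonalProjectionOnto x : V) - V.orthogonalProjectionOnto y‖ ≤ C * ‖x - y‖ := by
  have hsup : Vᗮ ⊔ coordSubspace N J = ⊤ := by
    rwa [Submodule.span_union, Submodule.span_eq] at hspan
  have hline : Module.finrank ℝ ↥(Vᗮ ⊓ coordSubspace N J) = 1 := by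
    have := Submodule.finrank_orthogonal_inf_add_finrank hsup
    rw [hV, finrank_coordSubspace, hJ] at this
    omega
  obtain ⟨y₀, ⟨hy₀V, hy₀W⟩, hy₀, hline_eq⟩ :=
    Submodule.exists_norm_eq_one_eq_span_singleton hline
  have hker : LinearMap.ker V.orthogonalProjectionOnto.toLinearMap ⊓ coordSubspace N J =
      ℝ ∙ y₀ := by
    rw [← hline_eq, ← V.ker_orthogonalProjectionOnto]
  obtain ⟨c, hc, hlower⟩ := LinearMap.exists_pos_mul_norm_sub_le_of_ker_inf_eq_span _ hy₀ hker
  refine ⟨y₀, ⟨hy₀V, mem_sphereJ_iff.mpr ⟨hy₀W, hy₀⟩⟩, 1 / 2, one_half_pos, c, 1, hc, ?_⟩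
  rintro x ⟨hxS, hxB⟩ y ⟨hyS, hyB⟩
  rw [mem_sphereJ_iff] at hxS hyS
  refine ⟨hlower x hxS.1 y hyS.1 (hxS.2.trans hyS.2.symm) hxB hyB, ?_⟩
  rw [← map_sub, one_mul]
  exact V.norm_orthogonalProjectionOnto_apply_le _

/-- claim (6.2) in Lemma 6.4: let `V` be a `k`-dimensional subspace of
`ℝ^N` and let `S = S_J` for a `(k+1)`-element set `J` with
`Span(V^⊥ ∪ {e_j : j ∈ J}) = ℝ^N`.  Then there are `y₀ ∈ V^⊥ ∩ S` and `δ > 0` such that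
the orthogonal projection `P_V` restricted to `S ∩ B(y₀, δ)` is bi-Lipschitz onto its
image. -/
theorem projection_biLipschitz_near_point (N k : ℕ) (hk : 1 ≤ k) (hkN : k + 1 ≤ N)
    (V : Submodule ℝ (EuclideanSpace ℝ (Fin N))) (hV : Module.finrank ℝ V = k)
    (J : Finset (Fin N)) (hJ : J.card = k + 1)
    (hspan : Submodule.span ℝ
        ((Vᗮ : Set (EuclideanSpace ℝ (Fin N))) ∪
          ((fun j => EuclideanSpace.single j (1 : ℝ)) '' (J : Set (Fin N)))) = ⊤) :
    ∃ y₀ ∈ (Vᗮ : Set (EuclideanSpace ℝ (Fin N))) ∩ sphereJ N J, ∃ δ > (0 : ℝ),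
      ∃ c C : ℝ, 0 < c ∧
        ∀ x ∈ sphereJ N J ∩ Metric.ball y₀ δ, ∀ y ∈ sphereJ N J ∩ Metric.ball y₀ δ,
          c * ‖x - y‖ ≤ ‖(V.orthogonalProjectionOnto x : V) - V.orthogonalProjectionOnto y‖ ∧
          ‖(V.orthogonalProjectionOnto x : V) - V.orthogonalProjectionOnto y‖ ≤ C * ‖x - y‖ :=
  projection_biLipschitz_near_point_general N k V hV J hJ hspan
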